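/- arXiv:1605.05109 — 3 statements merged into one kernel-verified Lean document; each statement's English description precedes it below -/
import Mathlib

section
/- In the graph RA_{k,P}(S_a, S_b), if 0 ≤ i ≤ k−1 is such that S_a(i) = 1 and S_b(i) = 1, then d(ℓ′_i, v) ≤ 4P + 1 for every vertex v ∈ V_b. -/
/-!
Going from `ℓ′_i` to `ℓ_(i,c)` (`P`), along the `S_a(i)` path to `ℓ_(k+1,c)` (`P`), across the edge
to `r_(k+1,c)` (`1`) and back along the `S_b(i)` path to `r_(i,c)` (`P`) gives
`d(ℓ′_i, r_(i,c)) ≤ 3P + 1`. Every other `r_(i',c)` is within `3P + 1` as well: if `i'` and `i`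
differ in bit `j`, then `ℓ_(i,c) → (f_j or t_j) → (t′_j or f′_j) → r_(i',c)` has length `P + 1 + P`.
Each remaining vertex of `V_b` lies within `P` of some `r_(i',c)`, within `2P` of `r_(k+1,c)`,
or, for the bit vertex of `F′ ∪ T′` that `r_(i,c)` does not reach, within `P + 1` of `ℓ_(i,c)`.
-/

/-- Generic graph built from "hub" vertices and "segments": each segment `s`
is a path with `len s` edges between the two hubs `ends s`, whose
`len s - 1` internal vertices are the pairs `⟨s, t⟩`.  A segment of length 1
is just an edge between its two endpoints. -/
def segGraph {Hub Seg : Type} (ends : Seg → Hub × Hub) (len : Seg → ℕ) :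
    SimpleGraph (Hub ⊕ (s : Seg) × Fin (len s - 1)) :=
  SimpleGraph.fromRel fun u v =>
    match u, v with
    | Sum.inl x, Sum.inl y => ∃ s, len s = 1 ∧ ends s = (x, y)
    | Sum.inl x, Sum.inr ⟨s, t⟩ =>
        ((ends s).1 = x ∧ (t : ℕ) = 0) ∨ ((ends s).2 = x ∧ (t : ℕ) + 2 = len s)
    | Sum.inr ⟨s, t⟩, Sum.inl x =>
        ((ends s).1 = x ∧ (t : ℕ) = 0) ∨ ((ends s).2 = x ∧ (t : ℕ) + 2 = len s)
    | Sum.inr ⟨s, t⟩, Sum.inr ⟨s', t'⟩ =>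
        s = s' ∧ ((t : ℕ) + 1 = (t' : ℕ) ∨ (t' : ℕ) + 1 = (t : ℕ))

namespace SimpleGraph

variable {V : Type*} {G : SimpleGraph V} {u v w : V}

lemma edist_le_of_le_add {a b n : ℕ} (h₁ : G.edist u v ≤ a) (h₂ : G.edist v w ≤ b)
    (h : a + b ≤ n) : G.edist u w ≤ n :=
  G.edist_triangle.trans <| (add_le_add h₁ h₂).trans <| by exact_mod_cast h

lemma dist_le_of_edist_le {n : ℕ} (h : G.edist u v ≤ n) : G.dist u v ≤ n :=
  ENat.toNat_le_of_le_natCast h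

end SimpleGraph

lemma Nat.exists_lt_testBit_ne {a b n : ℕ} (ha : a < 2 ^ n) (hb : b < 2 ^ n) (hab : a ≠ b) :
    ∃ j < n, a.testBit j ≠ b.testBit j := by
  by_contra! h
  refine hab (Nat.eq_of_testBit_eq fun j => ?_)
  by_cases hj : j < n
  · exact h j hj
  · have hn : 2 ^ n ≤ 2 ^ j := Nat.pow_le_pow_right two_pos (by omega)
    rw [Nat.testBit_lt_two_pow (ha.trans_le hn), Nat.testBit_lt_two_pow (hb.trans_le hn)]

lemma Bool.ite_eq_ite_swap_of_ne {α : Type*} (x y : α) {b b' : Bool} (h : b ≠ b') :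
    (if b then x else y) = (if b' then y else x) := by
  cases b <;> cases b' <;> simp_all

section segGraph

open SimpleGraph

variable {Hub Seg : Type} (ends : Seg → Hub × Hub) (len : Seg → ℕ)

/-- The vertex at distance `p` from `(ends s).1` along `s`; meaningful for `p ≤ len s`. -/
def segVert (s : Seg) (p : ℕ) : Hub ⊕ (s : Seg) × Fin (len s - 1) :=
  if h : 0 < p ∧ p < len s then Sum.inr ⟨s, ⟨p - 1, by omega⟩⟩
  else if p = 0 then Sum.inl (ends s).1 else Sum.inl (ends s).2

lemma segVert_zero (s : Seg) : segVert ends len s 0 = Sum.inl (ends s).1 := by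
  simp [segVert]

lemma segVert_len (s : Seg) (h : 0 < len s) :
    segVert ends len s (len s) = Sum.inl (ends s).2 := by
  simp [segVert, h.ne']

lemma segVert_succ (s : Seg) (t : Fin (len s - 1)) :
    segVert ends len s (t + 1) = Sum.inr ⟨s, t⟩ := by
  have ht := t.2
  rw [segVert, dif_pos ⟨by omega, by omega⟩]
  rfl

lemma edist_segVert_succ_le (s : Seg) (p : ℕ) (hp : p + 1 ≤ len s) :
    (segGraph ends len).edist (segVert ends len s p) (segVert ends len s (p + 1)) ≤ 1 := by
  rw [edist_le_one_iff_adj_or_eq, segGraph, fromRel_adj]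
  by_cases heq : segVert ends len s p = segVert ends len s (p + 1)
  · exact Or.inr heq
  refine Or.inl ⟨heq, Or.inl ?_⟩
  unfold segVert
  split_ifs <;> grind

lemma edist_segVert_le (s : Seg) {p q : ℕ} (hpq : p ≤ q) (hq : q ≤ len s) :
    (segGraph ends len).edist (segVert ends len s p) (segVert ends len s q) ≤ (q - p : ℕ) := by
  induction q, hpq using Nat.le_induction with
  | base => simp
  | succ q hpq ih =>
    exact edist_le_of_le_add (ih (by omega)) (edist_segVert_succ_le ends len s q hq) (by omega)

lemma edist_ends_le (s : Seg) (h : 0 < len s) :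
    (segGraph ends len).edist (Sum.inl (ends s).1) (Sum.inl (ends s).2) ≤ len s := by
  simpa [segVert_zero, segVert_len ends len s h] using
    edist_segVert_le ends len s (Nat.zero_le _) le_rfl

lemma edist_fst_inr_le (s : Seg) (t : Fin (len s - 1)) :
    (segGraph ends len).edist (Sum.inl (ends s).1) (Sum.inr ⟨s, t⟩) ≤ (t + 1 : ℕ) := by
  have ht := t.2
  simpa [segVert_zero, segVert_succ] using
    edist_segVert_le ends len s (Nat.zero_le (t + 1)) (by omega)

lemma edist_snd_inr_le (s : Seg) (t : Fin (len s - 1)) :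
    (segGraph ends len).edist (Sum.inl (ends s).2) (Sum.inr ⟨s, t⟩) ≤ (len s - (t + 1) : ℕ) := by
  have ht := t.2
  rw [edist_comm, ← segVert_succ, ← segVert_len ends len s (by omega)]
  exact edist_segVert_le ends len s (by omega) le_rfl

end segGraph

namespace RadApprox

/-- Hub vertices of `RA_{k,P}(S_a,S_b)`: two copies (indexed by `Bool`) of the
distinguished vertices of `G′`, together with the shared vertices `ℓ′_i`. -/
inductive Hub (m : ℕ) : Type
  | L : Bool → Fin (2 ^ m) → Hub m
  | R : Bool → Fin (2 ^ m) → Hub m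
  | R' : Bool → Fin (2 ^ m) → Hub m
  | lk : Bool → Hub m
  | lk1 : Bool → Hub m
  | rk : Bool → Hub m
  | rk1 : Bool → Hub m
  | F : Bool → Fin m → Hub m
  | T : Bool → Fin m → Hub m
  | F' : Bool → Fin m → Hub m
  | T' : Bool → Fin m → Hub m
  | L' : Fin (2 ^ m) → Hub m

/-- Segments (paths between hubs) of `RA_{k,P}(S_a,S_b)`; the first `Bool`
argument selects the copy of `G′`. -/
inductive Seg (m : ℕ) (Sa Sb : Fin (2 ^ m) → Bool) : Type
  | Llk : Bool → Fin (2 ^ m) → Seg m Sa Sb             -- ℓ_i – ℓ_k, length P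
  | Rrk : Bool → Fin (2 ^ m) → Seg m Sa Sb             -- r_i – r_k, length P
  | lklk1 : Bool → Seg m Sa Sb                          -- ℓ_k – ℓ_{k+1}, length 2P
  | rkrk1 : Bool → Seg m Sa Sb                          -- r_k – r_{k+1}, length 2P
  | lk1rk1 : Bool → Seg m Sa Sb                         -- edge ℓ_{k+1} – r_{k+1}
  | Lbit : Bool → Fin (2 ^ m) → Fin m → Seg m Sa Sb    -- ℓ_i – (f_j or t_j), length P
  | Rbit : Bool → Fin (2 ^ m) → Fin m → Seg m Sa Sb    -- r_i – (f'_j or t'_j), length P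
  | FT' : Bool → Fin m → Seg m Sa Sb                   -- edge f_j – t'_j
  | TF' : Bool → Fin m → Seg m Sa Sb                   -- edge t_j – f'_j
  | R'R : Bool → Fin (2 ^ m) → Seg m Sa Sb             -- r'_i – r_i, length P
  | L'L : Bool → Fin (2 ^ m) → Seg m Sa Sb             -- ℓ'_i – ℓ_{(i,c)}, length P
  | Slk1 : Bool → (i : Fin (2 ^ m)) → Sa i = true → Seg m Sa Sb
      -- ℓ_{(i,c)} – ℓ_{(k+1,c)}, length P (present iff S_a(i) = 1)
  | Srk1 : Bool → (i : Fin (2 ^ m)) → Sb i = true → Seg m Sa Sb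
      -- r_{(i,c)} – r_{(k+1,c)}, length P (present iff S_b(i) = 1)

open Hub Seg

def ends (m : ℕ) (Sa Sb : Fin (2 ^ m) → Bool) : Seg m Sa Sb → Hub m × Hub m
  | Llk c i => (L c i, lk c)
  | Rrk c i => (R c i, rk c)
  | lklk1 c => (lk c, lk1 c)
  | rkrk1 c => (rk c, rk1 c)
  | lk1rk1 c => (lk1 c, rk1 c)
  | Lbit c i j => (L c i, if Nat.testBit i.val j.val then T c j else F c j)
  | Rbit c i j => (R c i, if Nat.testBit i.val j.val then T' c j else F' c j)
  | FT' c j => (F c j, T' c j)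
  | TF' c j => (T c j, F' c j)
  | R'R c i => (R' c i, R c i)
  | L'L c i => (L' i, L c i)
  | Slk1 c i _ => (L c i, lk1 c)
  | Srk1 c i _ => (R c i, rk1 c)

def len (m P : ℕ) (Sa Sb : Fin (2 ^ m) → Bool) : Seg m Sa Sb → ℕ
  | lk1rk1 _ => 1
  | FT' _ _ => 1
  | TF' _ _ => 1
  | lklk1 _ => 2 * P
  | rkrk1 _ => 2 * P
  | _ => P

/-- Vertices of `RA_{k,P}(S_a,S_b)`. -/
abbrev V (m P : ℕ) (Sa Sb : Fin (2 ^ m) → Bool) : Type :=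
  Hub m ⊕ (s : Seg m Sa Sb) × Fin (len m P Sa Sb s - 1)

/-- The graph `RA_{k,P}(S_a, S_b)`. -/
def RA (m P : ℕ) (Sa Sb : Fin (2 ^ m) → Bool) : SimpleGraph (V m P Sa Sb) :=
  segGraph (ends m Sa Sb) (len m P Sa Sb)

/-- Membership in `V_b`: both copies of `R ∪ R′ ∪ F′ ∪ T′ ∪ {r_k, r_{k+1}}`
and all internal vertices of paths joining two such vertices. -/
def inVb {m P : ℕ} {Sa Sb : Fin (2 ^ m) → Bool} : V m P Sa Sb → Prop
  | Sum.inl (R _ _) => True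
  | Sum.inl (R' _ _) => True
  | Sum.inl (F' _ _) => True
  | Sum.inl (T' _ _) => True
  | Sum.inl (rk _) => True
  | Sum.inl (rk1 _) => True
  | Sum.inr ⟨Rrk _ _, _⟩ => True
  | Sum.inr ⟨rkrk1 _, _⟩ => True
  | Sum.inr ⟨Rbit _ _ _, _⟩ => True
  | Sum.inr ⟨R'R _ _, _⟩ => True
  | Sum.inr ⟨Srk1 _ _ _, _⟩ => True
  | _ => False

open Hub Seg SimpleGraph

variable {m P : ℕ} {Sa Sb : Fin (2 ^ m) → Bool}

lemma len_pos (hP : 1 ≤ P) (s : Seg m Sa Sb) : 0 < len m P Sa Sb s := by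
  cases s <;> simp only [len] <;> omega

lemma edist_RA_ends_le (hP : 1 ≤ P) (s : Seg m Sa Sb) :
    (RA m P Sa Sb).edist (Sum.inl (ends m Sa Sb s).1) (Sum.inl (ends m Sa Sb s).2) ≤
      len m P Sa Sb s :=
  edist_ends_le _ _ s (len_pos hP s)

lemma edist_L'_L (hP : 1 ≤ P) (c : Bool) (i : Fin (2 ^ m)) :
    (RA m P Sa Sb).edist (Sum.inl (L' i)) (Sum.inl (L c i)) ≤ P :=
  edist_RA_ends_le hP (L'L c i)

lemma edist_L'_rk1 (hP : 1 ≤ P) {i : Fin (2 ^ m)} (ha : Sa i = true) (c : Bool) :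
    (RA m P Sa Sb).edist (Sum.inl (L' i)) (Sum.inl (rk1 c)) ≤ (2 * P + 1 : ℕ) :=
  edist_le_of_le_add
    (edist_le_of_le_add (edist_L'_L hP c i) (edist_RA_ends_le hP (Slk1 c i ha)) le_rfl)
    (edist_RA_ends_le hP (lk1rk1 c)) (by simp only [len]; omega)

lemma edist_L'_R_self (hP : 1 ≤ P) {i : Fin (2 ^ m)} (ha : Sa i = true) (hb : Sb i = true)
    (c : Bool) :
    (RA m P Sa Sb).edist (Sum.inl (L' i)) (Sum.inl (R c i)) ≤ (3 * P + 1 : ℕ) :=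
  edist_le_of_le_add (edist_L'_rk1 hP ha c)
    (edist_comm.trans_le (edist_RA_ends_le hP (Srk1 c i hb))) (by simp only [len]; omega)

lemma edist_L_flipBit (hP : 1 ≤ P) (c : Bool) (i : Fin (2 ^ m)) (j : Fin m) :
    (RA m P Sa Sb).edist (Sum.inl (L c i))
      (Sum.inl (if (i : ℕ).testBit j then F' c j else T' c j)) ≤ (P + 1 : ℕ) := by
  have hbit := edist_RA_ends_le (Sa := Sa) (Sb := Sb) hP (Lbit c i j)
  have hflip : (RA m P Sa Sb).edist (Sum.inl (if (i : ℕ).testBit j then T c j else F c j))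
      (Sum.inl (if (i : ℕ).testBit j then F' c j else T' c j)) ≤ 1 := by
    cases (i : ℕ).testBit j
    · exact edist_ends_le _ _ (FT' c j) Nat.one_pos
    · exact edist_ends_le _ _ (TF' c j) Nat.one_pos
  exact edist_le_of_le_add hbit hflip le_rfl

lemma edist_L'_R (hP : 1 ≤ P) {i : Fin (2 ^ m)} (ha : Sa i = true) (hb : Sb i = true)
    (c : Bool) (i' : Fin (2 ^ m)) :
    (RA m P Sa Sb).edist (Sum.inl (L' i)) (Sum.inl (R c i')) ≤ (3 * P + 1 : ℕ) := by
  rcases eq_or_ne i' i with rfl | hne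
  · exact edist_L'_R_self hP ha hb c
  obtain ⟨j, hj, hdiff⟩ := Nat.exists_lt_testBit_ne i'.2 i.2 (Fin.val_ne_of_ne hne)
  have hR : (RA m P Sa Sb).edist
      (Sum.inl (if (i : ℕ).testBit j then F' c ⟨j, hj⟩ else T' c ⟨j, hj⟩)) (Sum.inl (R c i')) ≤
        P := by
    rw [edist_comm, ← Bool.ite_eq_ite_swap_of_ne _ _ hdiff]
    exact edist_RA_ends_le hP (Rbit c i' ⟨j, hj⟩)
  exact edist_le_of_le_add (edist_le_of_le_add (edist_L'_L hP c i)
    (edist_L_flipBit hP c i ⟨j, hj⟩) le_rfl) hR (by omega)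

lemma edist_L'_bitR (hP : 1 ≤ P) {i : Fin (2 ^ m)} (ha : Sa i = true) (hb : Sb i = true)
    (c : Bool) (j : Fin m) (b : Bool) :
    (RA m P Sa Sb).edist (Sum.inl (L' i)) (Sum.inl (if b then T' c j else F' c j)) ≤
      (4 * P + 1 : ℕ) := by
  by_cases hbi : b = (i : ℕ).testBit j
  · subst hbi
    exact edist_le_of_le_add (edist_L'_R_self hP ha hb c)
      (edist_RA_ends_le hP (Rbit c i j)) (by simp only [len]; omega)
  · rw [Bool.ite_eq_ite_swap_of_ne _ _ hbi]
    exact edist_le_of_le_add (edist_L'_L hP c i) (edist_L_flipBit hP c i j) (by omega)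

lemma edist_L'_le_of_inVb (hP : 1 ≤ P) {i : Fin (2 ^ m)} (ha : Sa i = true)
    (hb : Sb i = true) {v : V m P Sa Sb} (hv : inVb v) :
    (RA m P Sa Sb).edist (Sum.inl (L' i)) v ≤ (4 * P + 1 : ℕ) := by
  have hR c i' := edist_L'_R hP ha hb c i'
  have hrk1 c := edist_L'_rk1 (Sb := Sb) hP ha c
  rcases v with h | ⟨s, t⟩
  · cases h
    case R c i' => exact (hR c i').trans (Nat.cast_le.mpr (by omega))
    case R' c i' =>
      exact edist_le_of_le_add (hR c i')
        (edist_comm.trans_le (edist_RA_ends_le hP (R'R c i'))) (by simp only [len]; omega)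
    case F' c j => exact edist_L'_bitR hP ha hb c j false
    case T' c j => exact edist_L'_bitR hP ha hb c j true
    case rk c =>
      exact edist_le_of_le_add (hrk1 c)
        (edist_comm.trans_le (edist_RA_ends_le hP (rkrk1 c))) (by simp only [len]; omega)
    case rk1 c => exact (hrk1 c).trans (Nat.cast_le.mpr (by omega))
    all_goals exact hv.elim
  · have ht := t.2
    cases s
    case Rrk c i' =>
      exact edist_le_of_le_add (hR c i') (edist_fst_inr_le _ _ (Rrk c i') t)
        (by simp only [len] at ht; omega)
    case Rbit c i' j =>
      exact edist_le_of_le_add (hR c i') (edist_fst_inr_le _ _ (Rbit c i' j) t)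
        (by simp only [len] at ht; omega)
    case R'R c i' =>
      exact edist_le_of_le_add (hR c i') (edist_snd_inr_le _ _ (R'R c i') t)
        (by simp only [len] at ht ⊢; omega)
    case rkrk1 c =>
      exact edist_le_of_le_add (hrk1 c) (edist_snd_inr_le _ _ (rkrk1 c) t)
        (by simp only [len] at ht ⊢; omega)
    case Srk1 c i' hi' =>
      exact edist_le_of_le_add (hrk1 c) (edist_snd_inr_le _ _ (Srk1 c i' hi') t)
        (by simp only [len] at ht ⊢; omega)
    all_goals exact hv.elim

theorem statement14_general (m P : ℕ) (hP : 1 ≤ P)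
    (Sa Sb : Fin (2 ^ m) → Bool) (i : Fin (2 ^ m))
    (ha : Sa i = true) (hb : Sb i = true) :
    ∀ v : V m P Sa Sb, inVb v →
      (RA m P Sa Sb).dist (Sum.inl (L' i)) v ≤ 4 * P + 1 :=
  fun _ hv => dist_le_of_edist_le (edist_L'_le_of_inVb hP ha hb hv)

theorem statement14 (m P : ℕ) (hm : 1 ≤ m) (hP : 1 ≤ P)
    (Sa Sb : Fin (2 ^ m) → Bool) (i : Fin (2 ^ m))
    (ha : Sa i = true) (hb : Sb i = true) :
    ∀ v : V m P Sa Sb, inVb v →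
      (RA m P Sa Sb).dist (Sum.inl (L' i)) v ≤ 4 * P + 1 :=
  statement14_general m P hP Sa Sb i ha hb

end RadApprox
end

section
/- In the graph E_{k,P}(S_a, S_b): there exists an index 0 ≤ i ≤ k−1 with S_a(i) = 1 and S_b(i) = 1 if and only if there exists a vertex ℓ_i ∈ L with eccentricity e(ℓ_i) = 3P + 1; moreover, if for every 0 ≤ i ≤ k−1 either S_a(i) = 0 or S_b(i) = 0, then every vertex of L has eccentricity at least 5P + 1. -/
namespace EccGadget


/-- Bounded-length walk predicate. -/
def WB {V : Type*} (G : SimpleGraph V) (u v : V) (n : ℕ) : Prop :=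
  ∃ p : G.Walk u v, p.length ≤ n

namespace WB

variable {V : Type*} {G : SimpleGraph V} {u v w : V} {a b n : ℕ}

theorem rfl' (u : V) : WB G u u 0 := ⟨.nil, le_rfl⟩

theorem symm (h : WB G u v n) : WB G v u n := by
  obtain ⟨p, hp⟩ := h
  exact ⟨p.reverse, by simpa using hp⟩

theorem trans (h1 : WB G u v a) (h2 : WB G v w b) : WB G u w (a + b) := by
  obtain ⟨p, hp⟩ := h1; obtain ⟨q, hq⟩ := h2
  exact ⟨p.append q, by simp only [SimpleGraph.Walk.length_append]; omega⟩

theorem of_adj (h : G.Adj u v) : WB G u v 1 := ⟨.cons h .nil, le_rfl⟩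

theorem mono (h : WB G u v a) (hab : a ≤ b) : WB G u v b := by
  obtain ⟨p, hp⟩ := h; exact ⟨p, hp.trans hab⟩

theorem dist_le (h : WB G u v n) : G.dist u v ≤ n := by
  obtain ⟨p, hp⟩ := h; exact (SimpleGraph.dist_le p).trans hp

theorem reachable (h : WB G u v n) : G.Reachable u v := by
  obtain ⟨p, _⟩ := h; exact ⟨p⟩

end WB

theorem pot_walk {V : Type*} {G : SimpleGraph V} (Φ : V → ℕ)
    (hΦ : ∀ u v, G.Adj u v → Φ v ≤ Φ u + 1) :
    ∀ {u v : V} (p : G.Walk u v), Φ v ≤ Φ u + p.length := by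
  intro u v p
  induction p with
  | nil => simp
  | cons h q ih =>
    have h1 := hΦ _ _ h
    simp only [SimpleGraph.Walk.length_cons]
    omega

/-- A 1-Lipschitz function gives a lower bound on the distance. -/
theorem pot_le_dist {V : Type*} {G : SimpleGraph V} (Φ : V → ℕ)
    (hΦ : ∀ u v, G.Adj u v → Φ v ≤ Φ u + 1) {u v : V} (hr : G.Reachable u v) :
    Φ v ≤ Φ u + G.dist u v := by
  obtain ⟨p, hp⟩ := hr.exists_walk_length_eq_dist
  rw [← hp]
  exact pot_walk Φ hΦ p

section Generic

variable {Hub Seg : Type} {ends : Seg → Hub × Hub} {len : Seg → ℕ}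

theorem adj_left (s : Seg) (t : Fin (len s - 1)) (ht : (t : ℕ) = 0) :
    (segGraph ends len).Adj (Sum.inl (ends s).1) (Sum.inr ⟨s, t⟩) := by
  unfold segGraph
  rw [SimpleGraph.fromRel_adj]
  exact ⟨by simp, Or.inl (Or.inl ⟨rfl, ht⟩)⟩

theorem adj_right (s : Seg) (t : Fin (len s - 1)) (ht : (t : ℕ) + 2 = len s) :
    (segGraph ends len).Adj (Sum.inr ⟨s, t⟩) (Sum.inl (ends s).2) := by
  unfold segGraph
  rw [SimpleGraph.fromRel_adj]
  exact ⟨by simp, Or.inl (Or.inr ⟨rfl, ht⟩)⟩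

theorem adj_consec (s : Seg) (t t' : Fin (len s - 1)) (h : (t : ℕ) + 1 = (t' : ℕ)) :
    (segGraph ends len).Adj
      (Sum.inr (⟨s, t⟩ : (s : Seg) × Fin (len s - 1))) (Sum.inr ⟨s, t'⟩) := by
  unfold segGraph
  rw [SimpleGraph.fromRel_adj]
  refine ⟨?_, Or.inl ⟨rfl, Or.inl h⟩⟩
  intro hc
  rw [Sum.inr.injEq, Sigma.mk.inj_iff] at hc
  obtain ⟨-, hc2⟩ := hc
  rw [heq_iff_eq] at hc2
  subst hc2
  omega

theorem adj_hubs (s : Seg) (h1 : len s = 1) (hne : (ends s).1 ≠ (ends s).2) :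
    (segGraph ends len).Adj (Sum.inl (ends s).1) (Sum.inl (ends s).2) := by
  unfold segGraph
  rw [SimpleGraph.fromRel_adj]
  exact ⟨by simpa using hne, Or.inl ⟨s, h1, rfl⟩⟩

theorem WB_left (s : Seg) (t : Fin (len s - 1)) :
    WB (segGraph ends len) (Sum.inl (ends s).1) (Sum.inr ⟨s, t⟩) ((t : ℕ) + 1) := by
  obtain ⟨tv, ht⟩ := t
  induction tv with
  | zero => exact WB.of_adj (adj_left s ⟨0, ht⟩ rfl)
  | succ n ih =>
    have hn : n < len s - 1 := by omega
    exact (ih hn).trans (WB.of_adj (adj_consec s ⟨n, hn⟩ ⟨n+1, ht⟩ rfl))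

theorem WB_right (s : Seg) (t : Fin (len s - 1)) :
    WB (segGraph ends len) (Sum.inr ⟨s, t⟩) (Sum.inl (ends s).2) (len s - 1 - (t : ℕ)) := by
  suffices h : ∀ (d tv : ℕ) (ht : tv < len s - 1), len s - 1 - tv = d + 1 →
      WB (segGraph ends len) (Sum.inr ⟨s, ⟨tv, ht⟩⟩) (Sum.inl (ends s).2) (d + 1) by
    obtain ⟨tv, ht⟩ := t
    have heq : len s - 1 - tv = (len s - 2 - tv) + 1 := by omega
    have := h _ tv ht heq
    simpa [heq] using this
  intro d
  induction d with
  | zero =>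
    intro tv ht hd
    exact WB.of_adj (adj_right s ⟨tv, ht⟩ (show tv + 2 = len s by omega))
  | succ d ih =>
    intro tv ht hd
    have ht' : tv + 1 < len s - 1 := by omega
    have h2 := (WB.of_adj (adj_consec s ⟨tv, ht⟩ ⟨tv+1, ht'⟩ rfl)).trans
      (ih (tv+1) ht' (by omega))
    exact h2.mono (by omega)

theorem WB_ends (s : Seg) (hne : (ends s).1 ≠ (ends s).2) (hlen : 1 ≤ len s) :
    WB (segGraph ends len) (Sum.inl (ends s).1) (Sum.inl (ends s).2) (len s) := by
  rcases Nat.lt_or_ge (len s) 2 with h2 | h2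
  · have h1 : len s = 1 := by omega
    exact (WB.of_adj (adj_hubs s h1 hne)).mono (by omega)
  · have h0 : 0 < len s - 1 := by omega
    have h3 := (WB_left (ends := ends) s ⟨0, h0⟩).trans (WB_right (ends := ends) s ⟨0, h0⟩)
    refine h3.mono ?_
    simp only [Fin.val_mk]
    omega

theorem WB_internal {u : Hub ⊕ (s : Seg) × Fin (len s - 1)} (s : Seg)
    (t : Fin (len s - 1)) {D1 D2 B : ℕ}
    (h1 : WB (segGraph ends len) u (Sum.inl (ends s).1) D1)
    (h2 : WB (segGraph ends len) u (Sum.inl (ends s).2) D2)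
    (hB : D1 + D2 + len s ≤ 2 * B + 1) :
    WB (segGraph ends len) u (Sum.inr ⟨s, t⟩) B := by
  have ht : (t : ℕ) < len s - 1 := t.isLt
  by_cases hc : D1 + ((t : ℕ) + 1) ≤ B
  · exact ((h1.trans (WB_left s t)).mono hc)
  · refine ((h2.trans (WB_right s t).symm).mono ?_)
    omega

/-- Extension of a hub potential to internal vertices. -/
def pot (h : Hub → ℕ) : (Hub ⊕ (s : Seg) × Fin (len s - 1)) → ℕ
  | Sum.inl x => h x
  | Sum.inr ⟨s, t⟩ => min (h (ends s).1 + (t : ℕ) + 1) (h (ends s).2 + (len s - 1 - (t : ℕ)))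

theorem pot_step (h : Hub → ℕ)
    (Hseg : ∀ s : Seg, h (ends s).1 ≤ h (ends s).2 + len s ∧
      h (ends s).2 ≤ h (ends s).1 + len s) :
    ∀ u v, (segGraph ends len).Adj u v →
      pot (ends := ends) (len := len) h v ≤ pot (ends := ends) (len := len) h u + 1 := by
  intro u v hadj
  unfold segGraph at hadj
  rw [SimpleGraph.fromRel_adj] at hadj
  obtain ⟨hne, hr⟩ := hadj
  match u, v with
  | Sum.inl x, Sum.inl y =>
    simp only [pot]
    rcases hr with ⟨s, h1, h2⟩ | ⟨s, h1, h2⟩ <;>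
      · have := Hseg s
        rw [h2] at this
        simp only [Prod.fst, Prod.snd] at this
        omega
  | Sum.inl x, Sum.inr ⟨s, t⟩ =>
    have ht : (t : ℕ) < len s - 1 := t.isLt
    have hs := Hseg s
    simp only [pot]
    rcases hr with (⟨h1, h2⟩ | ⟨h1, h2⟩) | (⟨h1, h2⟩ | ⟨h1, h2⟩) <;> rw [← h1] <;> omega
  | Sum.inr ⟨s, t⟩, Sum.inl x =>
    have ht : (t : ℕ) < len s - 1 := t.isLt
    have hs := Hseg s
    simp only [pot]
    rcases hr with (⟨h1, h2⟩ | ⟨h1, h2⟩) | (⟨h1, h2⟩ | ⟨h1, h2⟩) <;> rw [← h1] <;> omega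
  | Sum.inr ⟨s, t⟩, Sum.inr ⟨s', t'⟩ =>
    rcases hr with ⟨h1, h2⟩ | ⟨h1, h2⟩ <;> subst h1 <;>
      · have ht := t.isLt
        have ht' := t'.isLt
        simp only [pot]
        omega

end Generic


/-- Hub vertices of the eccentricity graph `E_{k,P}(S_a,S_b)`. -/
inductive Hub (m : ℕ) : Type
  | L : Fin (2 ^ m) → Hub m
  | R : Fin (2 ^ m) → Hub m
  | R' : Fin (2 ^ m) → Hub m
  | lk : Hub m
  | lk1 : Hub m
  | rk : Hub m
  | rk1 : Hub m
  | F : Fin m → Hub m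
  | T : Fin m → Hub m
  | F' : Fin m → Hub m
  | T' : Fin m → Hub m

/-- Segments (paths between hubs) of `E_{k,P}(S_a,S_b)`. -/
inductive Seg (m : ℕ) (Sa Sb : Fin (2 ^ m) → Bool) : Type
  | Llk : Fin (2 ^ m) → Seg m Sa Sb            -- ℓ_i – ℓ_k, length P
  | Rrk : Fin (2 ^ m) → Seg m Sa Sb            -- r_i – r_k, length P
  | lklk1 : Seg m Sa Sb                        -- ℓ_k – ℓ_{k+1}, length 2P
  | rkrk1 : Seg m Sa Sb                        -- r_k – r_{k+1}, length 2P
  | lk1rk1 : Seg m Sa Sb                       -- edge ℓ_{k+1} – r_{k+1}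
  | Lbit : Fin (2 ^ m) → Fin m → Seg m Sa Sb   -- ℓ_i – (f_j or t_j), length P
  | Rbit : Fin (2 ^ m) → Fin m → Seg m Sa Sb   -- r_i – (f'_j or t'_j), length P
  | FT' : Fin m → Seg m Sa Sb                  -- edge f_j – t'_j
  | TF' : Fin m → Seg m Sa Sb                  -- edge t_j – f'_j
  | R'R : Fin (2 ^ m) → Seg m Sa Sb            -- r'_i – r_i, length P
  | Slk1 : (i : Fin (2 ^ m)) → Sa i = true → Seg m Sa Sb
      -- ℓ_i – ℓ_{k+1}, length P (present iff S_a(i) = 1)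
  | Srk1 : (i : Fin (2 ^ m)) → Sb i = true → Seg m Sa Sb
      -- r_i – r_{k+1}, length P (present iff S_b(i) = 1)

open Hub Seg

/-- Endpoints of each segment. -/
def ends (m : ℕ) (Sa Sb : Fin (2 ^ m) → Bool) : Seg m Sa Sb → Hub m × Hub m
  | Llk i => (L i, lk)
  | Rrk i => (R i, rk)
  | lklk1 => (lk, lk1)
  | rkrk1 => (rk, rk1)
  | lk1rk1 => (lk1, rk1)
  | Lbit i j => (L i, if Nat.testBit i.val j.val then T j else F j)
  | Rbit i j => (R i, if Nat.testBit i.val j.val then T' j else F' j)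
  | FT' j => (F j, T' j)
  | TF' j => (T j, F' j)
  | R'R i => (R' i, R i)
  | Slk1 i _ => (L i, lk1)
  | Srk1 i _ => (R i, rk1)

/-- Length of each segment. -/
def len (m P : ℕ) (Sa Sb : Fin (2 ^ m) → Bool) : Seg m Sa Sb → ℕ
  | lk1rk1 => 1
  | FT' _ => 1
  | TF' _ => 1
  | lklk1 => 2 * P
  | rkrk1 => 2 * P
  | _ => P

/-- Vertices of `E_{k,P}(S_a,S_b)`. -/
abbrev V (m P : ℕ) (Sa Sb : Fin (2 ^ m) → Bool) : Type :=
  Hub m ⊕ (s : Seg m Sa Sb) × Fin (len m P Sa Sb s - 1)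

/-- The eccentricity graph `E_{k,P}(S_a, S_b)`. -/
def E (m P : ℕ) (Sa Sb : Fin (2 ^ m) → Bool) : SimpleGraph (V m P Sa Sb) :=
  segGraph (ends m Sa Sb) (len m P Sa Sb)

section App

variable {m P : ℕ} (Sa Sb : Fin (2 ^ m) → Bool)

theorem ends_ne (s : Seg m Sa Sb) :
    (ends m Sa Sb s).1 ≠ (ends m Sa Sb s).2 := by
  cases s <;> simp [ends] <;> split <;> simp

theorem len_pos (hP : 1 ≤ P) (s : Seg m Sa Sb) : 1 ≤ len m P Sa Sb s := by
  cases s <;> simp [len] <;> omega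

theorem wseg (hP : 1 ≤ P) (s : Seg m Sa Sb) :
    WB (E m P Sa Sb) (Sum.inl (ends m Sa Sb s).1) (Sum.inl (ends m Sa Sb s).2)
      (len m P Sa Sb s) :=
  WB_ends s (ends_ne Sa Sb s) (len_pos Sa Sb hP s)

theorem exists_diff_bit {i i' : Fin (2 ^ m)} (h : i ≠ i') :
    ∃ j : Fin m, Nat.testBit i.val j.val ≠ Nat.testBit i'.val j.val := by
  by_contra hc
  push_neg at hc
  apply h
  apply Fin.ext
  apply Nat.eq_of_testBit_eq
  intro j
  by_cases hj : j < m
  · exact hc ⟨j, hj⟩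
  · have h1 : i.val < 2 ^ j := lt_of_lt_of_le i.isLt
      (Nat.pow_le_pow_right (by norm_num) (le_of_not_gt hj))
    have h2 : i'.val < 2 ^ j := lt_of_lt_of_le i'.isLt
      (Nat.pow_le_pow_right (by norm_num) (le_of_not_gt hj))
    rw [Nat.testBit_eq_false_of_lt h1, Nat.testBit_eq_false_of_lt h2]

theorem exists_bit (I : Fin (2 ^ m)) (j : Fin m) (b : Bool) :
    ∃ i' : Fin (2 ^ m), Nat.testBit i'.val j.val = b := by
  by_cases hI : Nat.testBit I.val j.val = b
  · exact ⟨I, hI⟩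
  · refine ⟨⟨I.val ^^^ 2 ^ j.val,
      Nat.xor_lt_two_pow I.isLt (Nat.pow_lt_pow_right (by norm_num) j.isLt)⟩, ?_⟩
    simp only [Nat.testBit_xor, Nat.testBit_two_pow_self]
    cases b <;> cases hb : Nat.testBit I.val j.val <;> simp_all

/-- Crossing from the `L` side to the `R` side through a differing bit. -/
theorem wb_LR (hP : 1 ≤ P) {I i' : Fin (2 ^ m)} (j : Fin m)
    (hb : Nat.testBit I.val j.val ≠ Nat.testBit i'.val j.val) :
    WB (E m P Sa Sb) (Sum.inl (Hub.L I)) (Sum.inl (Hub.R i')) (2 * P + 1) := by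
  cases hIb : Nat.testBit I.val j.val with
  | false =>
    have hib : Nat.testBit i'.val j.val = true := by
      revert hb; rw [hIb]; cases Nat.testBit i'.val j.val <;> simp
    have w1 : WB (E m P Sa Sb) (Sum.inl (Hub.L I)) (Sum.inl (Hub.F j)) P := by
      have h := wseg Sa Sb hP (Seg.Lbit I j); simp [ends, hIb] at h
      simpa [len] using h
    have w2 : WB (E m P Sa Sb) (Sum.inl (Hub.F j)) (Sum.inl (Hub.T' j)) 1 := by
      have h := wseg Sa Sb hP (Seg.FT' j); simpa [ends, len] using h
    have w3 : WB (E m P Sa Sb) (Sum.inl (Hub.R i')) (Sum.inl (Hub.T' j)) P := by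
      have h := wseg Sa Sb hP (Seg.Rbit i' j); simp [ends, hib] at h
      simpa [len] using h
    exact ((w1.trans w2).trans w3.symm).mono (by omega)
  | true =>
    have hib : Nat.testBit i'.val j.val = false := by
      revert hb; rw [hIb]; cases Nat.testBit i'.val j.val <;> simp
    have w1 : WB (E m P Sa Sb) (Sum.inl (Hub.L I)) (Sum.inl (Hub.T j)) P := by
      have h := wseg Sa Sb hP (Seg.Lbit I j); simp [ends, hIb] at h
      simpa [len] using h
    have w2 : WB (E m P Sa Sb) (Sum.inl (Hub.T j)) (Sum.inl (Hub.F' j)) 1 := by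
      have h := wseg Sa Sb hP (Seg.TF' j); simpa [ends, len] using h
    have w3 : WB (E m P Sa Sb) (Sum.inl (Hub.R i')) (Sum.inl (Hub.F' j)) P := by
      have h := wseg Sa Sb hP (Seg.Rbit i' j); simp [ends, hib] at h
      simpa [len] using h
    exact ((w1.trans w2).trans w3.symm).mono (by omega)

theorem wb_R_A (hP : 1 ≤ P) {I : Fin (2 ^ m)} (ha : Sa I = true) (hb : Sb I = true)
    (i' : Fin (2 ^ m)) :
    WB (E m P Sa Sb) (Sum.inl (Hub.L I)) (Sum.inl (Hub.R i')) (2 * P + 1) := by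
  by_cases hi : i' = I
  · subst hi
    have w1 : WB (E m P Sa Sb) (Sum.inl (Hub.L i')) (Sum.inl Hub.lk1) P :=
      wseg Sa Sb hP (Seg.Slk1 i' ha)
    have w2 : WB (E m P Sa Sb) (Sum.inl Hub.lk1) (Sum.inl Hub.rk1) 1 :=
      wseg Sa Sb hP Seg.lk1rk1
    have w3 : WB (E m P Sa Sb) (Sum.inl (Hub.R i')) (Sum.inl Hub.rk1) P :=
      wseg Sa Sb hP (Seg.Srk1 i' hb)
    exact ((w1.trans w2).trans w3.symm).mono (by omega)
  · obtain ⟨j, hj⟩ := exists_diff_bit (Ne.symm hi)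
    exact wb_LR Sa Sb hP j hj

/-- Upper-bound table for case A. -/
def tblA (m P : ℕ) : Hub m → ℕ
  | .L _ => 2 * P
  | .lk => P
  | .lk1 => P
  | .rk1 => P + 1
  | .rk => 3 * P + 1
  | .R _ => 2 * P + 1
  | .R' _ => 3 * P + 1
  | .F _ => 3 * P
  | .T _ => 3 * P
  | .F' _ => 3 * P + 1
  | .T' _ => 3 * P + 1

theorem hubA (hP : 1 ≤ P) {I : Fin (2 ^ m)} (ha : Sa I = true) (hb : Sb I = true) :
    ∀ x : Hub m, WB (E m P Sa Sb) (Sum.inl (Hub.L I)) (Sum.inl x) (tblA m P x) := by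
  have wR := wb_R_A Sa Sb hP ha hb
  have wlk : ∀ i'' : Fin (2 ^ m), WB (E m P Sa Sb) (Sum.inl (Hub.L i'')) (Sum.inl Hub.lk) P :=
    fun i'' => wseg Sa Sb hP (Seg.Llk i'')
  have wlk1 : WB (E m P Sa Sb) (Sum.inl (Hub.L I)) (Sum.inl Hub.lk1) P :=
    wseg Sa Sb hP (Seg.Slk1 I ha)
  have wrk1 : WB (E m P Sa Sb) (Sum.inl (Hub.L I)) (Sum.inl Hub.rk1) (P + 1) :=
    wlk1.trans (wseg Sa Sb hP Seg.lk1rk1)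
  intro x
  cases x with
  | L i'' => exact ((wlk I).trans (wlk i'').symm).mono (by simp [tblA]; omega)
  | lk => exact wlk I
  | lk1 => exact wlk1
  | rk1 => exact wrk1
  | rk => exact ((wR I).trans (wseg Sa Sb hP (Seg.Rrk I))).mono (by simp [len, tblA]; omega)
  | R i'' => exact wR i''
  | R' i'' =>
    exact ((wR i'').trans (wseg Sa Sb hP (Seg.R'R i'')).symm).mono (by simp [len, tblA]; omega)
  | F j =>
    cases hbj : Nat.testBit I.val j.val with
    | false =>
      have h := wseg Sa Sb hP (Seg.Lbit I j); simp [ends, hbj] at h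
      exact h.mono (by simp [len, tblA]; omega)
    | true =>
      obtain ⟨i0, hi0⟩ := exists_bit I j false
      have h := wseg Sa Sb hP (Seg.Lbit i0 j); simp [ends, hi0] at h
      have hL : WB (E m P Sa Sb) (Sum.inl (Hub.L I)) (Sum.inl (Hub.L i0)) (P + P) :=
        (wlk I).trans (wlk i0).symm
      exact (hL.trans h).mono (by simp [len, tblA]; omega)
  | T j =>
    cases hbj : Nat.testBit I.val j.val with
    | true =>
      have h := wseg Sa Sb hP (Seg.Lbit I j); simp [ends, hbj] at h
      exact h.mono (by simp [len, tblA]; omega)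
    | false =>
      obtain ⟨i0, hi0⟩ := exists_bit I j true
      have h := wseg Sa Sb hP (Seg.Lbit i0 j); simp [ends, hi0] at h
      have hL : WB (E m P Sa Sb) (Sum.inl (Hub.L I)) (Sum.inl (Hub.L i0)) (P + P) :=
        (wlk I).trans (wlk i0).symm
      exact (hL.trans h).mono (by simp [len, tblA]; omega)
  | F' j =>
    obtain ⟨i0, hi0⟩ := exists_bit I j false
    have h := wseg Sa Sb hP (Seg.Rbit i0 j); simp [ends, hi0] at h
    exact ((wR i0).trans h).mono (by simp [len, tblA]; omega)
  | T' j =>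
    obtain ⟨i0, hi0⟩ := exists_bit I j true
    have h := wseg Sa Sb hP (Seg.Rbit i0 j); simp [ends, hi0] at h
    exact ((wR i0).trans h).mono (by simp [len, tblA]; omega)

theorem upperA (hP : 1 ≤ P) {I : Fin (2 ^ m)} (ha : Sa I = true) (hb : Sb I = true) :
    ∀ v : V m P Sa Sb, (E m P Sa Sb).dist (Sum.inl (Hub.L I)) v ≤ 3 * P + 1 := by
  have htbl := hubA Sa Sb hP ha hb
  intro v
  cases v with
  | inl x =>
    refine WB.dist_le ((htbl x).mono ?_)
    cases x <;> simp [tblA] <;> omega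
  | inr p =>
    obtain ⟨s, t⟩ := p
    refine WB.dist_le (WB_internal s t (htbl (ends m Sa Sb s).1) (htbl (ends m Sa Sb s).2) ?_)
    cases s with
    | Lbit i j =>
      cases hc : Nat.testBit i.val j.val <;> simp [ends, len, tblA, hc] <;> omega
    | Rbit i j =>
      cases hc : Nat.testBit i.val j.val <;> simp [ends, len, tblA, hc] <;> omega
    | Llk i => simp [ends, len, tblA]; omega
    | Rrk i => simp [ends, len, tblA]; omega
    | lklk1 => simp [ends, len, tblA]; omega
    | rkrk1 => simp [ends, len, tblA]; omega
    | lk1rk1 => simp [ends, len, tblA]; omega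
    | FT' j => simp [ends, len, tblA]; omega
    | TF' j => simp [ends, len, tblA]; omega
    | R'R i => simp [ends, len, tblA]; omega
    | Slk1 i h => simp [ends, len, tblA]; omega
    | Srk1 i h => simp [ends, len, tblA]; omega

end App

section Low

variable {m P : ℕ} (Sa Sb : Fin (2 ^ m) → Bool)

open Hub Seg

/-- Potential table for the case `Sa I = Sb I = true` (lower bound `3P+1`). -/
def potA_tbl (m P : ℕ) (I : Fin (2 ^ m)) : Hub m → ℕ
  | .L _ => 3 * P + 1
  | .lk => 3 * P + 1
  | .lk1 => 2 * P + 1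
  | .rk1 => 2 * P
  | .rk => 2 * P
  | .R i => if i = I then P else 3 * P
  | .R' i => if i = I then 0 else 3 * P + 1
  | .F j => if Nat.testBit I.val j.val then 2 * P + 1 else 3 * P + 1
  | .T j => if Nat.testBit I.val j.val then 3 * P + 1 else 2 * P + 1
  | .T' j => if Nat.testBit I.val j.val then 2 * P else 3 * P + 1
  | .F' j => if Nat.testBit I.val j.val then 3 * P + 1 else 2 * P

/-- Potential table for the case `Sa I = false` (lower bound `5P+1`). -/
def potB0_tbl (m P : ℕ) (I : Fin (2 ^ m)) : Hub m → ℕ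
  | .L i => if i = I then 5 * P + 1 else 3 * P + 1
  | .lk => 4 * P + 1
  | .lk1 => 2 * P + 1
  | .rk1 => 2 * P
  | .rk => 2 * P
  | .R i => if i = I then P else 3 * P
  | .R' i => if i = I then 0 else 4 * P
  | .F j => if Nat.testBit I.val j.val then 2 * P + 1 else 4 * P + 1
  | .T j => if Nat.testBit I.val j.val then 4 * P + 1 else 2 * P + 1
  | .T' j => if Nat.testBit I.val j.val then 2 * P else 4 * P
  | .F' j => if Nat.testBit I.val j.val then 4 * P else 2 * P

/-- Potential table for the case `Sb I = false` (lower bound `5P+1`). -/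
def potB1_tbl (m P : ℕ) (I : Fin (2 ^ m)) : Hub m → ℕ
  | .L i => if i = I then 5 * P + 1 else 3 * P + 1
  | .lk => 4 * P + 1
  | .lk1 => 4 * P + 1
  | .rk1 => 4 * P
  | .rk => 2 * P
  | .R i => if i = I then P else 3 * P
  | .R' i => if i = I then 0 else 4 * P
  | .F j => if Nat.testBit I.val j.val then 2 * P + 1 else 4 * P + 1
  | .T j => if Nat.testBit I.val j.val then 4 * P + 1 else 2 * P + 1
  | .T' j => if Nat.testBit I.val j.val then 2 * P else 4 * P
  | .F' j => if Nat.testBit I.val j.val then 4 * P else 2 * P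

theorem potA_seg (hP : 1 ≤ P) (I : Fin (2 ^ m)) (s : Seg m Sa Sb) :
    potA_tbl m P I (ends m Sa Sb s).1 ≤ potA_tbl m P I (ends m Sa Sb s).2 + len m P Sa Sb s ∧
    potA_tbl m P I (ends m Sa Sb s).2 ≤ potA_tbl m P I (ends m Sa Sb s).1 + len m P Sa Sb s := by
  cases s with
  | Llk i => simp [ends, len, potA_tbl]; (try omega)
  | Rrk i => by_cases hi : i = I <;> simp [ends, len, potA_tbl, hi] <;> (try omega)
  | lklk1 => simp [ends, len, potA_tbl]; (try omega)
  | rkrk1 => simp [ends, len, potA_tbl]; (try omega)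
  | lk1rk1 => simp [ends, len, potA_tbl]; (try omega)
  | Lbit i j =>
    cases hc : Nat.testBit i.val j.val <;> cases hc2 : Nat.testBit I.val j.val <;>
      simp [ends, len, potA_tbl, hc, hc2] <;> (try omega)
  | Rbit i j =>
    by_cases hi : i = I
    · subst hi
      cases hc : Nat.testBit i.val j.val <;> simp [ends, len, potA_tbl, hc] <;> (try omega)
    · cases hc : Nat.testBit i.val j.val <;> cases hc2 : Nat.testBit I.val j.val <;>
        simp [ends, len, potA_tbl, hc, hc2, hi] <;> (try omega)
  | FT' j => cases hc2 : Nat.testBit I.val j.val <;> simp [ends, len, potA_tbl, hc2] <;> (try omega)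
  | TF' j => cases hc2 : Nat.testBit I.val j.val <;> simp [ends, len, potA_tbl, hc2] <;> (try omega)
  | R'R i => by_cases hi : i = I <;> simp [ends, len, potA_tbl, hi] <;> (try omega)
  | Slk1 i h => simp [ends, len, potA_tbl]; (try omega)
  | Srk1 i h => by_cases hi : i = I <;> simp [ends, len, potA_tbl, hi] <;> (try omega)

theorem potB0_seg (hP : 1 ≤ P) {I : Fin (2 ^ m)} (hsa : Sa I = false) (s : Seg m Sa Sb) :
    potB0_tbl m P I (ends m Sa Sb s).1 ≤ potB0_tbl m P I (ends m Sa Sb s).2 + len m P Sa Sb s ∧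
    potB0_tbl m P I (ends m Sa Sb s).2 ≤ potB0_tbl m P I (ends m Sa Sb s).1 + len m P Sa Sb s := by
  cases s with
  | Llk i => by_cases hi : i = I <;> simp [ends, len, potB0_tbl, hi] <;> (try omega)
  | Rrk i => by_cases hi : i = I <;> simp [ends, len, potB0_tbl, hi] <;> (try omega)
  | lklk1 => simp [ends, len, potB0_tbl]; (try omega)
  | rkrk1 => simp [ends, len, potB0_tbl]; (try omega)
  | lk1rk1 => simp [ends, len, potB0_tbl]; (try omega)
  | Lbit i j =>
    by_cases hi : i = I
    · subst hi
      cases hc : Nat.testBit i.val j.val <;> simp [ends, len, potB0_tbl, hc] <;> (try omega)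
    · cases hc : Nat.testBit i.val j.val <;> cases hc2 : Nat.testBit I.val j.val <;>
        simp [ends, len, potB0_tbl, hc, hc2, hi] <;> (try omega)
  | Rbit i j =>
    by_cases hi : i = I
    · subst hi
      cases hc : Nat.testBit i.val j.val <;> simp [ends, len, potB0_tbl, hc] <;> (try omega)
    · cases hc : Nat.testBit i.val j.val <;> cases hc2 : Nat.testBit I.val j.val <;>
        simp [ends, len, potB0_tbl, hc, hc2, hi] <;> (try omega)
  | FT' j => cases hc2 : Nat.testBit I.val j.val <;> simp [ends, len, potB0_tbl, hc2] <;> (try omega)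
  | TF' j => cases hc2 : Nat.testBit I.val j.val <;> simp [ends, len, potB0_tbl, hc2] <;> (try omega)
  | R'R i => by_cases hi : i = I <;> simp [ends, len, potB0_tbl, hi] <;> (try omega)
  | Slk1 i h =>
    have hi : i ≠ I := by rintro rfl; rw [h] at hsa; cases hsa
    simp [ends, len, potB0_tbl, hi]; (try omega)
  | Srk1 i h => by_cases hi : i = I <;> simp [ends, len, potB0_tbl, hi] <;> (try omega)

theorem potB1_seg (hP : 1 ≤ P) {I : Fin (2 ^ m)} (hsb : Sb I = false) (s : Seg m Sa Sb) :
    potB1_tbl m P I (ends m Sa Sb s).1 ≤ potB1_tbl m P I (ends m Sa Sb s).2 + len m P Sa Sb s ∧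
    potB1_tbl m P I (ends m Sa Sb s).2 ≤ potB1_tbl m P I (ends m Sa Sb s).1 + len m P Sa Sb s := by
  cases s with
  | Llk i => by_cases hi : i = I <;> simp [ends, len, potB1_tbl, hi] <;> (try omega)
  | Rrk i => by_cases hi : i = I <;> simp [ends, len, potB1_tbl, hi] <;> (try omega)
  | lklk1 => simp [ends, len, potB1_tbl]; (try omega)
  | rkrk1 => simp [ends, len, potB1_tbl]; (try omega)
  | lk1rk1 => simp [ends, len, potB1_tbl]; (try omega)
  | Lbit i j =>
    by_cases hi : i = I
    · subst hi
      cases hc : Nat.testBit i.val j.val <;> simp [ends, len, potB1_tbl, hc] <;> (try omega)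
    · cases hc : Nat.testBit i.val j.val <;> cases hc2 : Nat.testBit I.val j.val <;>
        simp [ends, len, potB1_tbl, hc, hc2, hi] <;> (try omega)
  | Rbit i j =>
    by_cases hi : i = I
    · subst hi
      cases hc : Nat.testBit i.val j.val <;> simp [ends, len, potB1_tbl, hc] <;> (try omega)
    · cases hc : Nat.testBit i.val j.val <;> cases hc2 : Nat.testBit I.val j.val <;>
        simp [ends, len, potB1_tbl, hc, hc2, hi] <;> (try omega)
  | FT' j => cases hc2 : Nat.testBit I.val j.val <;> simp [ends, len, potB1_tbl, hc2] <;> (try omega)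
  | TF' j => cases hc2 : Nat.testBit I.val j.val <;> simp [ends, len, potB1_tbl, hc2] <;> (try omega)
  | R'R i => by_cases hi : i = I <;> simp [ends, len, potB1_tbl, hi] <;> (try omega)
  | Slk1 i h => by_cases hi : i = I <;> simp [ends, len, potB1_tbl, hi] <;> (try omega)
  | Srk1 i h =>
    have hi : i ≠ I := by rintro rfl; rw [h] at hsb; cases hsb
    simp [ends, len, potB1_tbl, hi]; (try omega)

/-- `r'_I` is always reachable from `ℓ_I`. -/
theorem reachLR' (hP : 1 ≤ P) (I : Fin (2 ^ m)) :
    (E m P Sa Sb).Reachable (Sum.inl (Hub.L I)) (Sum.inl (Hub.R' I)) := by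
  have w1 := wseg Sa Sb hP (Seg.Llk I)
  have w2 := wseg Sa Sb hP (Seg.lklk1 (Sa := Sa) (Sb := Sb))
  have w3 := wseg Sa Sb hP (Seg.lk1rk1 (Sa := Sa) (Sb := Sb))
  have w4 := (wseg Sa Sb hP (Seg.rkrk1 (Sa := Sa) (Sb := Sb))).symm
  have w5 := (wseg Sa Sb hP (Seg.Rrk I)).symm
  have w6 := (wseg Sa Sb hP (Seg.R'R I)).symm
  exact (((((w1.trans w2).trans w3).trans w4).trans w5).trans w6).reachable

theorem lowerA (hP : 1 ≤ P) {I : Fin (2 ^ m)} (ha : Sa I = true) (hb : Sb I = true) :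
    3 * P + 1 ≤ (E m P Sa Sb).dist (Sum.inl (Hub.L I)) (Sum.inl (Hub.R' I)) := by
  have hstep := pot_step (ends := ends m Sa Sb) (len := len m P Sa Sb)
    (potA_tbl m P I) (potA_seg Sa Sb hP I)
  have hreach := ((reachLR' Sa Sb hP I).symm : (E m P Sa Sb).Reachable _ _)
  have h2 := pot_le_dist (G := E m P Sa Sb) _ hstep hreach
  rw [SimpleGraph.dist_comm] at h2
  simp [pot, potA_tbl] at h2
  omega

theorem lowerB (hP : 1 ≤ P) (I : Fin (2 ^ m)) (h : Sa I = false ∨ Sb I = false) :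
    5 * P + 1 ≤ (E m P Sa Sb).dist (Sum.inl (Hub.L I)) (Sum.inl (Hub.R' I)) := by
  have hreach := ((reachLR' Sa Sb hP I).symm : (E m P Sa Sb).Reachable _ _)
  cases h with
  | inl hsa =>
    have hstep := pot_step (ends := ends m Sa Sb) (len := len m P Sa Sb)
      (potB0_tbl m P I) (potB0_seg Sa Sb hP hsa)
    have h2 := pot_le_dist (G := E m P Sa Sb) _ hstep hreach
    rw [SimpleGraph.dist_comm] at h2
    simp [pot, potB0_tbl] at h2
    omega
  | inr hsb =>
    have hstep := pot_step (ends := ends m Sa Sb) (len := len m P Sa Sb)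
      (potB1_tbl m P I) (potB1_seg Sa Sb hP hsb)
    have h2 := pot_le_dist (G := E m P Sa Sb) _ hstep hreach
    rw [SimpleGraph.dist_comm] at h2
    simp [pot, potB1_tbl] at h2
    omega

end Low

theorem statement16 (m P : ℕ) (hm : 1 ≤ m) (hP : 1 ≤ P)
    (Sa Sb : Fin (2 ^ m) → Bool) :
    ((∃ i : Fin (2 ^ m), Sa i = true ∧ Sb i = true) ↔
      (∃ i : Fin (2 ^ m),
        (∀ v : V m P Sa Sb, (E m P Sa Sb).dist (Sum.inl (L i)) v ≤ 3 * P + 1) ∧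
        (∃ v : V m P Sa Sb, 3 * P + 1 ≤ (E m P Sa Sb).dist (Sum.inl (L i)) v))) ∧
    ((∀ i : Fin (2 ^ m), Sa i = false ∨ Sb i = false) →
      ∀ i : Fin (2 ^ m), ∃ v : V m P Sa Sb,
        5 * P + 1 ≤ (E m P Sa Sb).dist (Sum.inl (L i)) v) := by
  constructor
  · constructor
    · rintro ⟨i, ha, hb⟩
      exact ⟨i, upperA Sa Sb hP ha hb,
        ⟨Sum.inl (Hub.R' i), lowerA Sa Sb hP ha hb⟩⟩
    · rintro ⟨i, hub, -⟩
      by_contra hc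
      push_neg at hc
      have hS : ∀ i' : Fin (2 ^ m), Sa i' = false ∨ Sb i' = false := by
        intro i'
        have := hc i'
        cases h1 : Sa i' <;> cases h2 : Sb i' <;> simp_all
      have h5 := lowerB Sa Sb hP i (hS i)
      have h3 := hub (Sum.inl (Hub.R' i))
      omega
  · intro hS i
    exact ⟨Sum.inl (Hub.R' i), lowerB Sa Sb hP i (hS i)⟩

end EccGadget
end

section
/- In the spanner gadget graph H, for all 0 ≤ i, j ≤ k−1 with i ≠ j one has d_H(ℓ_i, r_j) = α + β + 1, and for all 0 ≤ i ≤ k−1 one has d_H(ℓ_i, r_i) = 2(α + β) + 1. -/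
namespace SpannerGadget

/-- Hub vertices of the spanner gadget `H`. -/
inductive Hub (m : ℕ) : Type
  | L : Fin (2 ^ m) → Hub m
  | R : Fin (2 ^ m) → Hub m
  | lk1 : Hub m
  | rk1 : Hub m
  | lk2 : Hub m
  | rk2 : Hub m
  | F : Fin m → Hub m
  | T : Fin m → Hub m
  | F' : Fin m → Hub m
  | T' : Fin m → Hub m

/-- Segments (paths between hubs) of the spanner gadget `H`,
with `P = α + β`. -/
inductive Seg (m : ℕ) : Type
  | Lbit : Fin (2 ^ m) → Fin m → Seg m   -- ℓ_i – (f_j or t_j), length P/2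
  | Rbit : Fin (2 ^ m) → Fin m → Seg m   -- r_i – (f'_j or t'_j), length P/2
  | FT' : Fin m → Seg m                  -- edge f_j – t'_j
  | TF' : Fin m → Seg m                  -- edge t_j – f'_j
  | Llk1 : Fin (2 ^ m) → Seg m           -- ℓ_i – ℓ_{k+1}, length P
  | Rrk1 : Fin (2 ^ m) → Seg m           -- r_i – r_{k+1}, length P
  | Llk2 : Fin (2 ^ m) → Seg m           -- ℓ_i – ℓ_{k+2}, length P/2
  | Rrk2 : Fin (2 ^ m) → Seg m           -- r_i – r_{k+2}, length P/2
  | lk1rk1 : Seg m                       -- edge ℓ_{k+1} – r_{k+1}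

open Hub Seg

/-- Endpoints of each segment. -/
def ends (m : ℕ) : Seg m → Hub m × Hub m
  | Lbit i j => (L i, if Nat.testBit i.val j.val then T j else F j)
  | Rbit i j => (R i, if Nat.testBit i.val j.val then T' j else F' j)
  | FT' j => (F j, T' j)
  | TF' j => (T j, F' j)
  | Llk1 i => (L i, lk1)
  | Rrk1 i => (R i, rk1)
  | Llk2 i => (L i, lk2)
  | Rrk2 i => (R i, rk2)
  | lk1rk1 => (lk1, rk1)

/-- Length of each segment, where `α` and `β` are the spanner parameters and
`P = α + β`. -/
def len (m α β : ℕ) : Seg m → ℕ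
  | FT' _ => 1
  | TF' _ => 1
  | lk1rk1 => 1
  | Llk1 _ => α + β
  | Rrk1 _ => α + β
  | _ => (α + β) / 2

/-- Vertices of the spanner gadget `H` (and of `G(S_a,S_b)`). -/
abbrev V (m α β : ℕ) : Type := Hub m ⊕ (s : Seg m) × Fin (len m α β s - 1)

/-- The spanner gadget `H`. -/
def H (m α β : ℕ) : SimpleGraph (V m α β) := segGraph (ends m) (len m α β)

/-- Extra edges depending on the input strings: an edge `ℓ_i–ℓ_{k+1}` for each
`i` with `S_a(i) = 1` and an edge `r_i–r_{k+1}` for each `i` with `S_b(i) = 1`. -/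
def extraRel (m α β : ℕ) (Sa Sb : Fin (2 ^ m) → Bool) : V m α β → V m α β → Prop
  | Sum.inl (L i), Sum.inl lk1 => Sa i = true
  | Sum.inl (R i), Sum.inl rk1 => Sb i = true
  | _, _ => False

/-- The graph `G(S_a, S_b)`: the gadget `H` together with the input edges. -/
def G (m α β : ℕ) (Sa Sb : Fin (2 ^ m) → Bool) : SimpleGraph (V m α β) :=
  H m α β ⊔ SimpleGraph.fromRel (extraRel m α β Sa Sb)

end SpannerGadget

namespace SimpleGraph

variable {V : Type*} {G : SimpleGraph V} {u v : V}

lemma Walk.le_add_length_of_adj_le_succ (f : V → ℕ) (hf : ∀ x y, G.Adj x y → f y ≤ f x + 1)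
    (p : G.Walk u v) : f v ≤ f u + p.length := by
  induction p with
  | nil => simp
  | cons hadj _ ih =>
    rw [Walk.length_cons]
    have := hf _ _ hadj
    omega

lemma dist_eq_length_of_adj_le_succ (f : V → ℕ) (hf : ∀ x y, G.Adj x y → f y ≤ f x + 1)
    (p : G.Walk u v) (hp : f u + p.length ≤ f v) : G.dist u v = p.length := by
  obtain ⟨q, hq⟩ := p.reachable.exists_walk_length_eq_dist
  have := q.le_add_length_of_adj_le_succ f hf
  have := dist_le p
  omega

end SimpleGraph

section SegGraph

open SimpleGraph

variable {Hub Seg : Type} (ends : Seg → Hub × Hub) (len : Seg → ℕ)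

def segPotential (φ : Hub → ℕ) : Hub ⊕ (s : Seg) × Fin (len s - 1) → ℕ
  | .inl x => φ x
  | .inr ⟨s, t⟩ => min (φ (ends s).1 + (t + 1)) (φ (ends s).2 + (len s - 1 - t))

def IsSegLipschitz (φ : Hub → ℕ) : Prop :=
  ∀ s, φ (ends s).1 ≤ φ (ends s).2 + len s ∧ φ (ends s).2 ≤ φ (ends s).1 + len s

variable {ends len}

lemma segPotential_adj_le_succ {φ : Hub → ℕ} (hφ : IsSegLipschitz ends len φ)
    (u v : Hub ⊕ (s : Seg) × Fin (len s - 1)) (h : (segGraph ends len).Adj u v) :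
    segPotential ends len φ v ≤ segPotential ends len φ u + 1 := by
  rw [segGraph, fromRel_adj] at h
  rcases u with x | ⟨s, t⟩ <;> rcases v with y | ⟨s', t'⟩
  · obtain ⟨-, ⟨s, hs, he⟩ | ⟨s, hs, he⟩⟩ := h <;>
    · have := hφ s
      simp only [he] at this
      simp only [segPotential]
      omega
  · have := hφ s'
    have := t'.isLt
    simp only [segPotential]
    obtain ⟨-, (⟨rfl, _⟩ | ⟨rfl, _⟩) | (⟨rfl, _⟩ | ⟨rfl, _⟩)⟩ := h <;> omega
  · have := hφ s
    have := t.isLt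
    simp only [segPotential]
    obtain ⟨-, (⟨rfl, _⟩ | ⟨rfl, _⟩) | (⟨rfl, _⟩ | ⟨rfl, _⟩)⟩ := h <;> omega
  · have := hφ s
    have := t.isLt
    have := t'.isLt
    simp only [segPotential]
    obtain ⟨-, ⟨rfl, _⟩ | ⟨rfl, _⟩⟩ := h <;> omega

lemma segGraph_dist_eq_of_walk {φ : Hub → ℕ} (hφ : IsSegLipschitz ends len φ) {x y : Hub}
    {n : ℕ} (p : (segGraph ends len).Walk (.inl x) (.inl y)) (hp : p.length = n)
    (hn : φ x + n ≤ φ y) :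
    (segGraph ends len).dist (.inl x) (.inl y) = n :=
  hp ▸ dist_eq_length_of_adj_le_succ _ (segPotential_adj_le_succ hφ) p (hp ▸ hn)

lemma segGraph_exists_walk_of_interior (s : Seg) :
    ∀ d (t : Fin (len s - 1)), t + 2 + d = len s →
      ∃ p : (segGraph ends len).Walk (.inr ⟨s, t⟩) (.inl (ends s).2), p.length = d + 1 := by
  intro d
  induction d with
  | zero =>
    intro t ht
    have hadj : (segGraph ends len).Adj (.inr ⟨s, t⟩) (.inl (ends s).2) := by
      rw [segGraph, fromRel_adj]
      exact ⟨by simp, Or.inl (Or.inr ⟨rfl, by omega⟩)⟩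
    exact ⟨hadj.toWalk, rfl⟩
  | succ d ih =>
    intro t ht
    let t' : Fin (len s - 1) := ⟨t + 1, by omega⟩
    obtain ⟨p, hp⟩ := ih t' (by simp only [t']; omega)
    have hadj : (segGraph ends len).Adj (.inr ⟨s, t⟩) (.inr ⟨s, t'⟩) := by
      rw [segGraph, fromRel_adj]
      refine ⟨?_, Or.inl ⟨rfl, Or.inl rfl⟩⟩
      simp [t', Fin.ext_iff]
    exact ⟨.cons hadj p, by rw [Walk.length_cons, hp]⟩

lemma segGraph_exists_walk (s : Seg) (hs : 1 ≤ len s) (hne : (ends s).1 ≠ (ends s).2) :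
    ∃ p : (segGraph ends len).Walk (.inl (ends s).1) (.inl (ends s).2), p.length = len s := by
  by_cases h1 : len s = 1
  · have hadj : (segGraph ends len).Adj (.inl (ends s).1) (.inl (ends s).2) := by
      rw [segGraph, fromRel_adj]
      exact ⟨by simpa using hne, Or.inl ⟨s, h1, rfl⟩⟩
    exact ⟨hadj.toWalk, h1.symm⟩
  · have h0 : 0 < len s - 1 := by omega
    have hadj : (segGraph ends len).Adj (.inl (ends s).1) (.inr ⟨s, ⟨0, h0⟩⟩) := by
      rw [segGraph, fromRel_adj]
      exact ⟨by simp, Or.inl (Or.inl ⟨rfl, rfl⟩)⟩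
    obtain ⟨p, hp⟩ := segGraph_exists_walk_of_interior s (len s - 2) ⟨0, h0⟩ (by simp; omega)
    exact ⟨.cons hadj p, by rw [Walk.length_cons, hp]; omega⟩

end SegGraph

namespace SpannerGadget

open Hub Seg SimpleGraph

variable {m α β : ℕ}

lemma exists_testBit_ne {i j : Fin (2 ^ m)} (hij : i ≠ j) :
    ∃ b : Fin m, (i : ℕ).testBit b ≠ (j : ℕ).testBit b := by
  obtain ⟨b, hb⟩ : ∃ b, (i : ℕ).testBit b ≠ (j : ℕ).testBit b := by
    by_contra! h
    exact hij (Fin.ext (Nat.eq_of_testBit_eq h))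
  refine ⟨⟨b, ?_⟩, hb⟩
  by_contra! hmb
  have hpow : 2 ^ m ≤ 2 ^ b := Nat.pow_le_pow_right two_pos hmb
  rw [Nat.testBit_eq_false_of_lt (i.isLt.trans_le hpow),
    Nat.testBit_eq_false_of_lt (j.isLt.trans_le hpow)] at hb
  exact hb rfl

lemma exists_walk_of_ends {s : Seg m} {a b : Hub m} (hab : ends m s = (a, b))
    (hs : 1 ≤ len m α β s) (hne : a ≠ b) :
    ∃ p : (H m α β).Walk (.inl a) (.inl b), p.length = len m α β s := by
  obtain ⟨p, hp⟩ := segGraph_exists_walk (ends := ends m) (len := len m α β) s hs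
    (by rw [hab]; exact hne)
  exact ⟨p.copy (by rw [hab]) (by rw [hab]), (Walk.length_copy _ _ _).trans hp⟩

lemma adj_of_testBit_ne {i j : Fin (2 ^ m)} {b : Fin m}
    (hb : (i : ℕ).testBit b ≠ (j : ℕ).testBit b) :
    (H m α β).Adj (.inl (if (i : ℕ).testBit b then T b else F b))
      (.inl (if (j : ℕ).testBit b then T' b else F' b)) := by
  rw [H, segGraph, fromRel_adj]
  cases hi : (i : ℕ).testBit b <;> cases hj : (j : ℕ).testBit b <;> rw [hi, hj] at hb
  · exact absurd rfl hb
  · exact ⟨by simp, Or.inl ⟨FT' b, rfl, rfl⟩⟩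
  · exact ⟨by simp, Or.inl ⟨TF' b, rfl, rfl⟩⟩
  · exact absurd rfl hb

lemma exists_walk_L_R_of_ne (heven : Even (α + β)) (hpos : 0 < α + β) {i j : Fin (2 ^ m)}
    (hij : i ≠ j) : ∃ p : (H m α β).Walk (.inl (L i)) (.inl (R j)), p.length = α + β + 1 := by
  obtain ⟨b, hb⟩ := exists_testBit_ne hij
  obtain ⟨c, hc⟩ := heven
  have hQ : 1 ≤ (α + β) / 2 := by omega
  obtain ⟨p, hp⟩ := exists_walk_of_ends (α := α) (β := β) (s := Lbit i b) rfl hQ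
    (by split <;> simp)
  obtain ⟨q, hq⟩ := exists_walk_of_ends (α := α) (β := β) (s := Rbit j b) rfl hQ
    (by split <;> simp)
  refine ⟨p.append (.cons (adj_of_testBit_ne hb) q.reverse), ?_⟩
  rw [Walk.length_append, Walk.length_cons, Walk.length_reverse, hp, hq]
  simp only [len]
  omega

lemma exists_walk_L_R_self (hpos : 0 < α + β) (i : Fin (2 ^ m)) :
    ∃ p : (H m α β).Walk (.inl (L i)) (.inl (R i)), p.length = 2 * (α + β) + 1 := by
  obtain ⟨p, hp⟩ := exists_walk_of_ends (α := α) (β := β) (s := Llk1 i) rfl hpos (by simp)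
  obtain ⟨q, hq⟩ := exists_walk_of_ends (α := α) (β := β) (s := Rrk1 i) rfl hpos (by simp)
  have hadj : (H m α β).Adj (.inl lk1) (.inl rk1) := by
    rw [H, segGraph, fromRel_adj]
    exact ⟨by simp, Or.inl ⟨lk1rk1, rfl, rfl⟩⟩
  refine ⟨p.append (.cons hadj q.reverse), ?_⟩
  rw [Walk.length_append, Walk.length_cons, Walk.length_reverse, hp, hq]
  simp only [len]
  omega

def distFromL (Q : ℕ) : Hub m → ℕ
  | L _ => 0
  | R _ => 2 * Q + 1
  | lk1 => 2 * Q
  | rk1 => 2 * Q + 1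
  | lk2 => Q
  | rk2 => 3 * Q + 1
  | F _ => Q
  | T _ => Q
  | F' _ => Q + 1
  | T' _ => Q + 1

def distFromLi (Q : ℕ) (i : Fin (2 ^ m)) : Hub m → ℕ
  | L i' => if i' = i then 0 else 2 * Q
  | R i' => if i' = i then 4 * Q + 1 else 2 * Q + 1
  | lk1 => 2 * Q
  | rk1 => 2 * Q + 1
  | lk2 => Q
  | rk2 => 3 * Q + 1
  | F b => if (i : ℕ).testBit b then 3 * Q else Q
  | T b => if (i : ℕ).testBit b then Q else 3 * Q
  | F' b => if (i : ℕ).testBit b then Q + 1 else 3 * Q + 1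
  | T' b => if (i : ℕ).testBit b then 3 * Q + 1 else Q + 1

lemma isSegLipschitz_distFromL (heven : Even (α + β)) :
    IsSegLipschitz (ends m) (len m α β) (distFromL ((α + β) / 2)) := by
  obtain ⟨c, hc⟩ := heven
  intro s
  cases s <;> simp only [ends, len] <;> (try split_ifs) <;> simp only [distFromL] <;> omega

lemma isSegLipschitz_distFromLi (heven : Even (α + β)) (i : Fin (2 ^ m)) :
    IsSegLipschitz (ends m) (len m α β) (distFromLi ((α + β) / 2) i) := by
  obtain ⟨c, hc⟩ := heven
  intro s
  cases s <;> simp only [ends, len] <;> (try split_ifs) <;> simp only [distFromLi] <;>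
    (try split_ifs) <;> simp_all <;> omega

lemma dist_L_R_of_ne (heven : Even (α + β)) (hpos : 0 < α + β) {i j : Fin (2 ^ m)}
    (hij : i ≠ j) : (H m α β).dist (.inl (L i)) (.inl (R j)) = α + β + 1 := by
  obtain ⟨p, hp⟩ := exists_walk_L_R_of_ne heven hpos hij
  refine segGraph_dist_eq_of_walk (isSegLipschitz_distFromL heven) p hp ?_
  obtain ⟨c, hc⟩ := heven
  simp only [distFromL]
  omega

lemma dist_L_R_self (heven : Even (α + β)) (hpos : 0 < α + β) (i : Fin (2 ^ m)) :
    (H m α β).dist (.inl (L i)) (.inl (R i)) = 2 * (α + β) + 1 := by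
  obtain ⟨p, hp⟩ := exists_walk_L_R_self hpos i
  refine segGraph_dist_eq_of_walk (isSegLipschitz_distFromLi heven i) p hp ?_
  obtain ⟨c, hc⟩ := heven
  simp only [distFromLi, ↓reduceIte]
  omega

theorem statement17_general (m α β : ℕ)
    (heven : Even (α + β)) (hpos : 0 < α + β) :
    (∀ i j : Fin (2 ^ m), i ≠ j →
      (H m α β).dist (Sum.inl (L i)) (Sum.inl (R j)) = α + β + 1) ∧
    (∀ i : Fin (2 ^ m),
      (H m α β).dist (Sum.inl (L i)) (Sum.inl (R i)) = 2 * (α + β) + 1) :=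
  ⟨fun _ _ => dist_L_R_of_ne heven hpos, dist_L_R_self heven hpos⟩

theorem statement17 (m α β : ℕ) (hm : 1 ≤ m) (hα : 1 ≤ α)
    (heven : Even (α + β)) (hpos : 0 < α + β) :
    (∀ i j : Fin (2 ^ m), i ≠ j →
      (H m α β).dist (Sum.inl (L i)) (Sum.inl (R j)) = α + β + 1) ∧
    (∀ i : Fin (2 ^ m),
      (H m α β).dist (Sum.inl (L i)) (Sum.inl (R i)) = 2 * (α + β) + 1) :=
  statement17_general m α β heven hpos

end SpannerGadget
end
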